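/- arXiv:1712.03809 — 2 statements merged into one kernel-verified Lean document; each statement's English description precedes it below -/
import Mathlib

section
/- With π an exchangeable random permutation of {1,…,N} as above, C_j the number of j-cycles, and L_1, L_2 the lengths of the first two cycles (ordered by least element), one has for 1 ≤ j ≤ N: ℙ(L_1 = j, L_2 = j) = E( (jC_j/N) · (j(C_j − 1)/(N − j)) ). Consequently, Var(C_j/N) = ((N−j)/N) · ℙ(L_1 = j, L_2 = j)/j² + ℙ(L_1 = j)/(Nj) − (ℙ(L_1 = j)/j)². -/
open scoped Classical

/-- Number of cycles of length `j` in a permutation (fixed points count as cycles of length 1). -/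
noncomputable def cycleCount {n : ℕ} (σ : Equiv.Perm (Fin n)) (j : ℕ) : ℕ :=
  if j = 1 then Fintype.card {x : Fin n // σ x = x} else Multiset.count j σ.cycleType

/-- `covered σ k` is the union of the first `k` cycles of `σ`, ordered by least element. -/
noncomputable def covered {N : ℕ} (σ : Equiv.Perm (Fin N)) : ℕ → Finset (Fin N)
  | 0 => ∅
  | k + 1 =>
    if h : ((covered σ k)ᶜ : Finset (Fin N)).Nonempty then
      covered σ k ∪
        Finset.univ.filter fun y => σ.SameCycle (((covered σ k)ᶜ : Finset (Fin N)).min' h) y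
    else covered σ k

/-- `cycleLenSeq σ k` is the length `L_{k+1}` of the `(k+1)`-st cycle of `σ` in the order of
least elements (and `0` once the cycles are exhausted). -/
noncomputable def cycleLenSeq {N : ℕ} (σ : Equiv.Perm (Fin N)) (k : ℕ) : ℕ :=
  (covered σ (k + 1)).card - (covered σ k).card

/-!
Exchangeability is used only through conjugation by transpositions, which transports the cycles
of `σ` along the transposition. Conjugating by `swap x y` shows that the expectation of a
conjugation-equivariant statistic `g σ x` does not depend on `x`, so it equals `1 / N` times the
expectation of `∑ x, g σ x`. Applied at the least label this gives `N ℙ(L₁ = j) = E(j C_j)`, and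
`N E(Y; L₁ = j) = E(j C_j (j C_j - j))`, where `Y` counts the points outside the first cycle
that lie in `j`-cycles. Conditionally on the first cycle being `S`, conjugating by transpositions
that fix `S` pointwise shows that the labels outside `S` are still exchangeable, so the least of
them, which starts the second cycle, may stand in for each of the `N - j` points outside `S`:
`E(Y; L₁ = j) = (N - j) ℙ(L₁ = L₂ = j)`. The variance formula is then algebra, using `C_N ≤ 1`
when `j = N`.
-/

open Equiv Finset

namespace Equiv.Perm

variable {α : Type*} [Fintype α] [DecidableEq α]

def cycleSet (σ : Perm α) (x : α) : Finset α := {y | σ.SameCycle x y}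

def cycleLen (σ : Perm α) (x : α) : ℕ := #(σ.cycleSet x)

@[simp]
theorem mem_cycleSet {σ : Perm α} {x y : α} : y ∈ σ.cycleSet x ↔ σ.SameCycle x y := by
  simp [cycleSet]

theorem mem_cycleSet_self (σ : Perm α) (x : α) : x ∈ σ.cycleSet x :=
  mem_cycleSet.2 (SameCycle.refl _ _)

theorem cycleSet_eq_of_sameCycle {σ : Perm α} {x y : α} (h : σ.SameCycle x y) :
    σ.cycleSet x = σ.cycleSet y := by
  ext z
  simp only [mem_cycleSet]
  exact ⟨h.symm.trans, h.trans⟩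

theorem cycleLen_eq_of_mem_cycleSet {σ : Perm α} {x y : α} (h : y ∈ σ.cycleSet x) :
    σ.cycleLen y = σ.cycleLen x := by
  rw [cycleLen, cycleLen, cycleSet_eq_of_sameCycle (mem_cycleSet.1 h)]

theorem cycleSet_conj (σ τ : Perm α) (x : α) :
    (τ * σ * τ⁻¹).cycleSet (τ x) = (σ.cycleSet x).image τ := by
  ext y
  simp only [mem_cycleSet, sameCycle_conj, mem_image, coe_inv, symm_apply_apply]
  exact ⟨fun h => ⟨τ⁻¹ y, h, by simp⟩, by rintro ⟨w, hw, rfl⟩; simpa using hw⟩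

theorem cycleLen_conj (σ τ : Perm α) (x : α) :
    (τ * σ * τ⁻¹).cycleLen (τ x) = σ.cycleLen x := by
  rw [cycleLen, cycleLen, cycleSet_conj, card_image_of_injective _ τ.injective]

theorem cycleSet_conj_eq_iff {σ τ : Perm α} {S : Finset α} (hτ : ∀ x ∈ S, τ x = x) (z : α) :
    (τ * σ * τ⁻¹).cycleSet z = S ↔ σ.cycleSet z = S := by
  by_cases hz : z ∈ S
  · have hS : S.image τ = S := by
      rw [image_congr (fun x hx => hτ x hx)]
      simp
    have hconj : (τ * σ * τ⁻¹).cycleSet z = (σ.cycleSet z).image τ := by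
      rw [← cycleSet_conj, hτ z hz]
    rw [hconj, ← hS, (image_injective τ.injective).eq_iff, hS]
  · constructor <;> rintro rfl <;> exact absurd (mem_cycleSet_self _ _) hz

theorem cycleSet_eq_support_cycleOf {σ : Perm α} {x : α} (hx : σ x ≠ x) :
    σ.cycleSet x = (σ.cycleOf x).support := by
  ext y
  rw [mem_cycleSet, mem_support_cycleOf_iff' hx]

theorem cycleLen_eq_one_iff {σ : Perm α} {x : α} : σ.cycleLen x = 1 ↔ σ x = x := by
  rw [cycleLen, card_eq_one]
  constructor
  · rintro ⟨a, ha⟩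
    have hx : x ∈ ({a} : Finset α) := ha ▸ mem_cycleSet_self σ x
    have hσx : σ x ∈ ({a} : Finset α) := ha ▸ mem_cycleSet.2 (SameCycle.refl σ x).apply_right
    rw [mem_singleton] at hx hσx
    exact hσx.trans hx.symm
  · intro h
    refine ⟨x, eq_singleton_iff_unique_mem.2 ⟨mem_cycleSet_self σ x, fun y hy => ?_⟩⟩
    obtain ⟨i, rfl⟩ := mem_cycleSet.1 hy
    exact zpow_apply_eq_self_of_apply_eq_self h i

theorem two_le_cycleLen_iff {σ : Perm α} {x : α} : 2 ≤ σ.cycleLen x ↔ σ x ≠ x := by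
  refine ⟨fun h hx => ?_, fun hx => ?_⟩
  · rw [← cycleLen_eq_one_iff] at hx
    omega
  · rw [cycleLen, cycleSet_eq_support_cycleOf hx]
    exact two_le_card_support_cycleOf_iff.2 hx

theorem card_filter_cycleLen_eq {j : ℕ} (hj : 2 ≤ j) (σ : Perm α) :
    #{x | σ.cycleLen x = j} = j * σ.cycleType.count j := by
  set s : Finset α := {x | σ.cycleLen x = j}
  set t := σ.cycleFactorsFinset.filter fun c => #c.support = j
  have hmaps : Set.MapsTo σ.cycleOf s t := by
    intro x hx
    rw [mem_coe, mem_filter] at hx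
    have hσx : σ x ≠ x := two_le_cycleLen_iff.1 (hx.2 ▸ hj)
    rw [mem_coe, mem_filter, cycleOf_mem_cycleFactorsFinset_iff, mem_support,
      ← cycleSet_eq_support_cycleOf hσx]
    exact ⟨hσx, hx.2⟩
  have hfiber : ∀ c ∈ t, {x ∈ s | σ.cycleOf x = c} = c.support := by
    intro c hc
    rw [mem_filter] at hc
    ext x
    simp only [s, mem_filter, mem_univ, true_and]
    constructor
    · rintro ⟨hx, rfl⟩
      rw [mem_support_cycleOf_iff, mem_support]
      exact ⟨SameCycle.refl _ _, two_le_cycleLen_iff.1 (hx ▸ hj)⟩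
    · intro hx
      have hσx : σ x ≠ x := mem_support.1 (mem_cycleFactorsFinset_support_le hc.1 hx)
      rw [← cycle_is_cycleOf hx hc.1, cycleLen, cycleSet_eq_support_cycleOf hσx,
        ← cycle_is_cycleOf hx hc.1]
      exact ⟨hc.2, rfl⟩
  have hcount : σ.cycleType.count j = #t := by
    rw [cycleType_def, Multiset.count_map, card_def, filter_val]
    simp_rw [Function.comp_apply, eq_comm]
  rw [card_eq_sum_card_fiberwise hmaps, sum_congr rfl fun c hc => congrArg card (hfiber c hc),
    sum_congr rfl fun c hc => (mem_filter.1 hc).2, sum_const, smul_eq_mul, hcount, mul_comm]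

theorem card_filter_cycleLen_eq_one (σ : Perm α) :
    #{x | σ.cycleLen x = 1} = Fintype.card {x // σ x = x} := by
  simp_rw [cycleLen_eq_one_iff, Fintype.card_subtype]

theorem card_filter_compl_cycleSet_add {σ : Perm α} {x : α} {j : ℕ} (hx : σ.cycleLen x = j) :
    #{y ∈ (σ.cycleSet x)ᶜ | σ.cycleLen y = j} + j = #{y | σ.cycleLen y = j} := by
  have hsub : σ.cycleSet x ⊆ ({y | σ.cycleLen y = j} : Finset α) := fun y hy => by
    simpa [cycleLen_eq_of_mem_cycleSet hy] using hx
  subst hx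
  rw [← card_sdiff_add_card_eq_card hsub]
  congr 2
  ext y
  simp only [mem_filter, mem_compl, mem_univ, true_and, mem_sdiff]
  exact and_comm

theorem card_filter_compl_cycleSet_conj (σ τ : Perm α) (x : α) (j : ℕ) :
    #{y ∈ ((τ * σ * τ⁻¹).cycleSet (τ x))ᶜ | (τ * σ * τ⁻¹).cycleLen y = j} =
      #{y ∈ (σ.cycleSet x)ᶜ | σ.cycleLen y = j} := by
  refine (card_equiv τ fun y => ?_).symm
  simp only [mem_filter, mem_compl, cycleSet_conj, cycleLen_conj,
    τ.injective.mem_finset_image]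

theorem disjoint_cycleSet_of_notMem {σ : Perm α} {x y : α} (h : y ∉ σ.cycleSet x) :
    _root_.Disjoint (σ.cycleSet x) (σ.cycleSet y) :=
  disjoint_left.2 fun _ hx hy =>
    h (mem_cycleSet.2 ((mem_cycleSet.1 hx).trans (mem_cycleSet.1 hy).symm))

theorem sum_powersetCard_ite_cycleSet_eq (σ : Perm α) (z : α) (j : ℕ) (H : Finset α → ℝ) :
    ∑ S ∈ powersetCard j univ, (if σ.cycleSet z = S then H S else 0) =
      if σ.cycleLen z = j then H (σ.cycleSet z) else 0 := by
  simp only [sum_ite_eq, mem_powersetCard_univ, cycleLen]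
  congr

end Equiv.Perm

open Equiv.Perm

theorem card_filter_cycleLen_eq_mul_cycleCount {n j : ℕ} (hj : 1 ≤ j) (σ : Perm (Fin n)) :
    #{x | σ.cycleLen x = j} = j * cycleCount σ j := by
  rcases hj.eq_or_lt with rfl | hj
  · rw [cycleCount, if_pos rfl, one_mul, card_filter_cycleLen_eq_one]
  · rw [cycleCount, if_neg hj.ne', card_filter_cycleLen_eq hj]

theorem cycleCount_le_one {N : ℕ} (hN : 0 < N) (σ : Perm (Fin N)) : cycleCount σ N ≤ 1 := by
  have hle := card_le_univ ({x | σ.cycleLen x = N} : Finset (Fin N))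
  rw [card_filter_cycleLen_eq_mul_cycleCount hN, Fintype.card_fin] at hle
  exact Nat.le_of_mul_le_mul_left (by simpa using hle) hN

section Exchangeable

variable {α : Type*} [Fintype α] [DecidableEq α] {p : Perm α → ℝ}

theorem sum_mul_conj (hp : ∀ τ σ : Perm α, p (τ * σ * τ⁻¹) = p σ) (f : Perm α → ℝ)
    (τ : Perm α) : ∑ σ, p σ * f (τ * σ * τ⁻¹) = ∑ σ, p σ * f σ :=
  Fintype.sum_equiv (MulAut.conj τ).toEquiv _ _ fun σ => by simp [hp]

theorem card_mul_sum_mul_eq_sum_mul_sum (hp : ∀ τ σ : Perm α, p (τ * σ * τ⁻¹) = p σ)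
    (g : Perm α → α → ℝ) (hg : ∀ τ σ x, g (τ * σ * τ⁻¹) (τ x) = g σ x) (x : α) :
    Fintype.card α * ∑ σ, p σ * g σ x = ∑ σ, p σ * ∑ y, g σ y := by
  have hswap : ∀ y, ∑ σ, p σ * g σ y = ∑ σ, p σ * g σ x := fun y => by
    rw [← sum_mul_conj hp (fun σ => g σ x) (swap x y)]
    refine sum_congr rfl fun σ _ => ?_
    rw [← hg (swap x y) σ y, swap_apply_right]
  calc Fintype.card α * ∑ σ, p σ * g σ x = ∑ y, ∑ σ, p σ * g σ y := by simp [hswap]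
    _ = ∑ σ, p σ * ∑ y, g σ y := by rw [sum_comm]; simp_rw [mul_sum]

theorem sum_mul_ite_cycleSet_eq_of_notMem (hp : ∀ τ σ : Perm α, p (τ * σ * τ⁻¹) = p σ)
    (g : Perm α → α → ℝ) (hg : ∀ τ σ x, g (τ * σ * τ⁻¹) (τ x) = g σ x) (z : α)
    {S : Finset α} {y y' : α} (hy : y ∉ S) (hy' : y' ∉ S) :
    ∑ σ, p σ * (if σ.cycleSet z = S then g σ y else 0) =
      ∑ σ, p σ * (if σ.cycleSet z = S then g σ y' else 0) := by
  have hfix : ∀ x ∈ S, swap y y' x = x := fun x hx =>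
    swap_apply_of_ne_of_ne (ne_of_mem_of_not_mem hx hy) (ne_of_mem_of_not_mem hx hy')
  rw [← sum_mul_conj hp _ (swap y y')]
  refine sum_congr rfl fun σ _ => ?_
  simp only [cycleSet_conj_eq_iff hfix]
  rw [← hg (swap y y') σ y', swap_apply_right]

theorem card_mul_sum_filter_cycleLen_eq (hp : ∀ τ σ : Perm α, p (τ * σ * τ⁻¹) = p σ) (j : ℕ)
    (z : α) :
    Fintype.card α * ∑ σ ∈ univ.filter (fun σ => σ.cycleLen z = j), p σ =
      ∑ σ, p σ * #{x | σ.cycleLen x = j} := by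
  simpa only [sum_filter, mul_boole, sum_boole] using card_mul_sum_mul_eq_sum_mul_sum hp
    (fun σ x => if σ.cycleLen x = j then 1 else 0) (fun τ σ x => by simp only [cycleLen_conj]) z

theorem card_mul_sum_mul_ite_cycleLen_eq (hp : ∀ τ σ : Perm α, p (τ * σ * τ⁻¹) = p σ) (j : ℕ)
    (z : α) :
    Fintype.card α * ∑ σ, p σ *
        (if σ.cycleLen z = j then (#{y ∈ (σ.cycleSet z)ᶜ | σ.cycleLen y = j} : ℝ) else 0) =
      ∑ σ, p σ * (#{x | σ.cycleLen x = j} * (#{x | σ.cycleLen x = j} - j)) := by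
  refine (card_mul_sum_mul_eq_sum_mul_sum hp
    (fun σ x => if σ.cycleLen x = j then (#{y ∈ (σ.cycleSet x)ᶜ | σ.cycleLen y = j} : ℝ) else 0)
    (fun τ σ x => by simp only [cycleLen_conj, card_filter_compl_cycleSet_conj]) z).trans ?_
  refine sum_congr rfl fun σ _ => ?_
  have hcard : ∀ x ∈ ({x | σ.cycleLen x = j} : Finset α),
      (#{y ∈ (σ.cycleSet x)ᶜ | σ.cycleLen y = j} : ℝ) = #{x | σ.cycleLen x = j} - j :=
    fun x hx => eq_sub_of_add_eq (by
      exact_mod_cast card_filter_compl_cycleSet_add (mem_filter.1 hx).2)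
  rw [← sum_filter, sum_congr rfl hcard, sum_const, nsmul_eq_mul]

theorem sum_mul_ite_cycleLen_eq (hp : ∀ τ σ : Perm α, p (τ * σ * τ⁻¹) = p σ) (j : ℕ) (z : α)
    (m : Finset α → α) (hm : ∀ S : Finset α, #S = j → m S ∉ S) :
    ∑ σ, p σ *
        (if σ.cycleLen z = j then (#{y ∈ (σ.cycleSet z)ᶜ | σ.cycleLen y = j} : ℝ) else 0) =
      (Fintype.card α - j) * ∑ σ, p σ *
        (if σ.cycleLen z = j then (if σ.cycleLen (m (σ.cycleSet z)) = j then 1 else 0) else 0) := by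
  set ind : Perm α → α → ℝ := fun σ y => if σ.cycleLen y = j then 1 else 0
  have hind : ∀ τ σ x, ind (τ * σ * τ⁻¹) (τ x) = ind σ x := fun τ σ x => by
    simp only [ind, cycleLen_conj]
  calc ∑ σ, p σ *
        (if σ.cycleLen z = j then (#{y ∈ (σ.cycleSet z)ᶜ | σ.cycleLen y = j} : ℝ) else 0)
      = ∑ σ, p σ * ∑ S ∈ powersetCard j univ,
          (if σ.cycleSet z = S then ∑ y ∈ Sᶜ, ind σ y else 0) := by
        simp_rw [sum_powersetCard_ite_cycleSet_eq, ind, card_filter]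
        push_cast
        rfl
    _ = ∑ S ∈ powersetCard j univ, ∑ y ∈ Sᶜ, ∑ σ, p σ *
          (if σ.cycleSet z = S then ind σ y else 0) := by
        simp_rw [ite_sum_zero, mul_sum]
        rw [sum_comm]
        exact sum_congr rfl fun S _ => sum_comm
    _ = ∑ S ∈ powersetCard j univ, ∑ y ∈ Sᶜ, ∑ σ, p σ *
          (if σ.cycleSet z = S then ind σ (m S) else 0) := by
        refine sum_congr rfl fun S hS => sum_congr rfl fun y hy => ?_
        exact sum_mul_ite_cycleSet_eq_of_notMem hp ind hind z (mem_compl.1 hy)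
          (hm S (mem_powersetCard_univ.1 hS))
    _ = ∑ S ∈ powersetCard j univ, (Fintype.card α - j) * ∑ σ, p σ *
          (if σ.cycleSet z = S then ind σ (m S) else 0) := by
        refine sum_congr rfl fun S hS => ?_
        rw [mem_powersetCard_univ] at hS
        rw [sum_const, card_compl, hS, nsmul_eq_mul, Nat.cast_sub (hS ▸ card_le_univ S)]
    _ = (Fintype.card α - j) * ∑ σ, p σ * ∑ S ∈ powersetCard j univ,
          (if σ.cycleSet z = S then ind σ (m S) else 0) := by
        rw [← mul_sum, sum_comm]
        simp_rw [mul_sum]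
    _ = _ := by simp_rw [sum_powersetCard_ite_cycleSet_eq]; rfl

theorem card_mul_card_sub_mul_sum_filter_cycleLen_eq (hp : ∀ τ σ : Perm α, p (τ * σ * τ⁻¹) = p σ)
    (j : ℕ) (z : α) (m : Finset α → α) (hm : ∀ S : Finset α, #S = j → m S ∉ S) :
    Fintype.card α * (Fintype.card α - j) * ∑ σ ∈ univ.filter
        (fun σ => σ.cycleLen z = j ∧ σ.cycleLen (m (σ.cycleSet z)) = j), p σ =
      ∑ σ, p σ * (#{x | σ.cycleLen x = j} * (#{x | σ.cycleLen x = j} - j)) := by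
  rw [← card_mul_sum_mul_ite_cycleLen_eq hp, sum_mul_ite_cycleLen_eq hp j z m hm, mul_assoc,
    sum_filter]
  simp only [ite_and, mul_ite, mul_one, mul_zero]

end Exchangeable

section FirstCycles

variable {N : ℕ} (σ : Perm (Fin N)) (h : (univ : Finset (Fin N)).Nonempty)

theorem covered_one : covered σ 1 = σ.cycleSet (univ.min' h) := by
  simp [covered, cycleSet, h]

theorem cycleLenSeq_zero : cycleLenSeq σ 0 = σ.cycleLen (univ.min' h) := by
  rw [cycleLenSeq, covered_one σ h, covered, card_empty, Nat.sub_zero, cycleLen]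

theorem cycleLenSeq_one (hne : (σ.cycleSet (univ.min' h))ᶜ.Nonempty) :
    cycleLenSeq σ 1 = σ.cycleLen ((σ.cycleSet (univ.min' h))ᶜ.min' hne) := by
  have h1 := covered_one σ h
  have hne' : (covered σ 1)ᶜ.Nonempty := h1 ▸ hne
  have hmin : (covered σ 1)ᶜ.min' hne' = (σ.cycleSet (univ.min' h))ᶜ.min' hne := by
    congr 1; rw [h1]
  have hdisj := disjoint_cycleSet_of_notMem (mem_compl.1 (min'_mem _ hne))
  rw [cycleLenSeq, covered, dif_pos hne', hmin, h1]
  change #(_ ∪ σ.cycleSet _) - _ = _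
  rw [card_union_of_disjoint hdisj, Nat.add_sub_cancel_left, cycleLen]

theorem cycleLenSeq_one_eq_zero (h0 : cycleLenSeq σ 0 = N) : cycleLenSeq σ 1 = 0 := by
  have huniv : covered σ 1 = univ := by
    apply eq_univ_of_card
    calc #(covered σ 1) = cycleLenSeq σ 0 := by simp [cycleLenSeq, covered]
      _ = Fintype.card (Fin N) := by rw [h0, Fintype.card_fin]
  rw [cycleLenSeq, covered, dif_neg (by simp [huniv]), Nat.sub_self]

theorem nonempty_compl_of_card_lt {S : Finset (Fin N)} (hS : #S < N) : Sᶜ.Nonempty := by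
  rw [← card_pos, card_compl, Fintype.card_fin]
  omega

theorem filter_cycleLenSeq_zero_one_eq {j : ℕ} (hjN : j < N) (m : Finset (Fin N) → Fin N)
    (hm : ∀ S (hS : Sᶜ.Nonempty), m S = Sᶜ.min' hS) :
    univ.filter (fun σ : Perm (Fin N) => cycleLenSeq σ 0 = j ∧ cycleLenSeq σ 1 = j) =
      univ.filter (fun σ => σ.cycleLen (univ.min' h) = j ∧
        σ.cycleLen (m (σ.cycleSet (univ.min' h))) = j) := by
  refine filter_congr fun σ _ => ?_
  rw [cycleLenSeq_zero σ h]
  refine and_congr_right fun hz => ?_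
  have hne := nonempty_compl_of_card_lt (hz ▸ hjN)
  rw [cycleLenSeq_one σ h hne, hm _ hne]

end FirstCycles

section FirstCycleLengths

variable {N : ℕ} {p : Perm (Fin N) → ℝ}

theorem sum_filter_cycleLenSeq_zero_eq (hN : 0 < N)
    (hp : ∀ τ σ : Perm (Fin N), p (τ * σ * τ⁻¹) = p σ) {j : ℕ} (hj : 1 ≤ j) :
    ∑ σ ∈ univ.filter (fun σ : Perm (Fin N) => cycleLenSeq σ 0 = j), p σ =
      ∑ σ, p σ * (j * cycleCount σ j / N) := by
  have h : (univ : Finset (Fin N)).Nonempty := univ_nonempty_iff.2 ⟨⟨0, hN⟩⟩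
  have key := card_mul_sum_filter_cycleLen_eq hp j (univ.min' h)
  simp only [Fintype.card_fin, card_filter_cycleLen_eq_mul_cycleCount hj] at key
  simp_rw [cycleLenSeq_zero _ h, mul_div_assoc', ← sum_div,
    eq_div_iff (by positivity : (N : ℝ) ≠ 0), mul_comm _ (N : ℝ), key]
  push_cast
  rfl

theorem sum_filter_cycleLenSeq_zero_one_eq (hN : 0 < N)
    (hp : ∀ τ σ : Perm (Fin N), p (τ * σ * τ⁻¹) = p σ) {j : ℕ} (hj1 : 1 ≤ j) (hjN : j ≤ N) :
    ∑ σ ∈ univ.filter (fun σ : Perm (Fin N) => cycleLenSeq σ 0 = j ∧ cycleLenSeq σ 1 = j), p σ =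
      ∑ σ, p σ * ((j * cycleCount σ j / N) * (j * (cycleCount σ j - 1) / (N - j))) := by
  have h : (univ : Finset (Fin N)).Nonempty := univ_nonempty_iff.2 ⟨⟨0, hN⟩⟩
  rcases hjN.lt_or_eq with hjN | rfl
  · set m : Finset (Fin N) → Fin N := fun S =>
      if hS : Sᶜ.Nonempty then Sᶜ.min' hS else univ.min' h
    have hm : ∀ S (hS : Sᶜ.Nonempty), m S = Sᶜ.min' hS := fun S hS => dif_pos hS
    have hm' : ∀ S : Finset (Fin N), #S = j → m S ∉ S := fun S hS => by
      have hne := nonempty_compl_of_card_lt (hS ▸ hjN)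
      exact hm S hne ▸ mem_compl.1 (min'_mem _ hne)
    rw [filter_cycleLenSeq_zero_one_eq h hjN m hm]
    have key := card_mul_card_sub_mul_sum_filter_cycleLen_eq hp j (univ.min' h) m hm'
    simp only [Fintype.card_fin, card_filter_cycleLen_eq_mul_cycleCount hj1] at key
    have hD : (N : ℝ) * (N - j) ≠ 0 := by
      have : (j : ℝ) < N := by exact_mod_cast hjN
      have : (0 : ℝ) < N := by exact_mod_cast hN
      positivity
    rw [← mul_div_cancel_left₀ (∑ σ ∈ _, p σ) hD, key, sum_div]
    refine sum_congr rfl fun σ _ => ?_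
    push_cast
    field_simp
  · have hfilter : univ.filter (fun σ : Perm (Fin j) => cycleLenSeq σ 0 = j ∧ cycleLenSeq σ 1 = j)
        = ∅ := filter_false_of_mem fun σ _ hσ => by
      rw [cycleLenSeq_one_eq_zero σ hσ.1] at hσ
      omega
    simp [hfilter]

end FirstCycleLengths

theorem div_sq_decomposition {N j C : ℕ} (hN : 0 < N) (hj1 : 1 ≤ j) (hjN : j ≤ N)
    (hC : j = N → C ≤ 1) :
    ((C : ℝ) / N) ^ 2 = ((N - j) / N) * ((j * C / N) * (j * (C - 1) / (N - j))) / j ^ 2 +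
      (j * C / N) / (N * j) := by
  have hN' : (N : ℝ) ≠ 0 := by positivity
  have hj' : (j : ℝ) ≠ 0 := by positivity
  rcases hjN.lt_or_eq with hjN | rfl
  · have : (N : ℝ) - j ≠ 0 := sub_ne_zero.2 (by exact_mod_cast hjN.ne')
    field_simp
    ring
  · have hCC : (C : ℝ) ^ 2 = C := by
      rcases Nat.le_one_iff_eq_zero_or_eq_one.1 (hC rfl) with h | h <;> simp [h]
    rw [sub_self, zero_div, zero_mul, zero_div, zero_add]
    field_simp
    linear_combination hCC

theorem stmt10_general (N : ℕ) (hN : 0 < N) (p : Equiv.Perm (Fin N) → ℝ)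
    (hinv : ∀ τ σ : Equiv.Perm (Fin N), p (τ * σ * τ⁻¹) = p σ)
    (j : ℕ) (hj1 : 1 ≤ j) (hjN : j ≤ N) :
    (∑ σ ∈ Finset.univ.filter (fun σ : Equiv.Perm (Fin N) =>
          cycleLenSeq σ 0 = j ∧ cycleLenSeq σ 1 = j), p σ =
        ∑ σ : Equiv.Perm (Fin N), p σ *
          (((j : ℝ) * cycleCount σ j / N) *
            ((j : ℝ) * ((cycleCount σ j : ℝ) - 1) / ((N : ℝ) - j)))) ∧
    ((∑ σ : Equiv.Perm (Fin N), p σ * ((cycleCount σ j : ℝ) / N) ^ 2) -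
        (∑ σ : Equiv.Perm (Fin N), p σ * ((cycleCount σ j : ℝ) / N)) ^ 2 =
      (((N : ℝ) - j) / N) *
          (∑ σ ∈ Finset.univ.filter (fun σ : Equiv.Perm (Fin N) =>
              cycleLenSeq σ 0 = j ∧ cycleLenSeq σ 1 = j), p σ) / (j : ℝ) ^ 2 +
        (∑ σ ∈ Finset.univ.filter (fun σ : Equiv.Perm (Fin N) =>
            cycleLenSeq σ 0 = j), p σ) / ((N : ℝ) * j) -
        ((∑ σ ∈ Finset.univ.filter (fun σ : Equiv.Perm (Fin N) =>
            cycleLenSeq σ 0 = j), p σ) / (j : ℝ)) ^ 2) := by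
  have hP2 := sum_filter_cycleLenSeq_zero_one_eq hN hinv hj1 hjN
  refine ⟨hP2, ?_⟩
  have hsq : ∑ σ, p σ * ((cycleCount σ j : ℝ) / N) ^ 2 = ((N - j) / N) * (∑ σ, p σ *
      ((j * cycleCount σ j / N) * (j * (cycleCount σ j - 1) / (N - j)))) / j ^ 2 +
        (∑ σ, p σ * (j * cycleCount σ j / N)) / (N * j) := by
    rw [mul_sum, sum_div, sum_div, ← sum_add_distrib]
    refine sum_congr rfl fun σ _ => ?_
    rw [div_sq_decomposition hN hj1 hjN fun h => h ▸ cycleCount_le_one hN σ]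
    ring
  have hmean : ∑ σ, p σ * ((cycleCount σ j : ℝ) / N) =
      (∑ σ, p σ * (j * cycleCount σ j / N)) / j := by
    rw [sum_div]
    refine sum_congr rfl fun σ _ => ?_
    field_simp
  rw [hP2, sum_filter_cycleLenSeq_zero_eq hN hinv hj1, hsq, hmean]

/-- For an exchangeable random permutation: `ℙ(L_1 = j, L_2 = j) = E((jC_j/N)·(j(C_j−1)/(N−j)))`,
and consequently
`Var(C_j/N) = ((N−j)/N)·ℙ(L_1=j,L_2=j)/j² + ℙ(L_1=j)/(Nj) − (ℙ(L_1=j)/j)²`. -/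
theorem stmt10 (N : ℕ) (hN : 0 < N) (p : Equiv.Perm (Fin N) → ℝ)
    (hp0 : ∀ σ, 0 ≤ p σ) (hp1 : ∑ σ : Equiv.Perm (Fin N), p σ = 1)
    (hinv : ∀ τ σ : Equiv.Perm (Fin N), p (τ * σ * τ⁻¹) = p σ)
    (j : ℕ) (hj1 : 1 ≤ j) (hjN : j ≤ N) :
    (∑ σ ∈ Finset.univ.filter (fun σ : Equiv.Perm (Fin N) =>
          cycleLenSeq σ 0 = j ∧ cycleLenSeq σ 1 = j), p σ =
        ∑ σ : Equiv.Perm (Fin N), p σ *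
          (((j : ℝ) * cycleCount σ j / N) *
            ((j : ℝ) * ((cycleCount σ j : ℝ) - 1) / ((N : ℝ) - j)))) ∧
    ((∑ σ : Equiv.Perm (Fin N), p σ * ((cycleCount σ j : ℝ) / N) ^ 2) -
        (∑ σ : Equiv.Perm (Fin N), p σ * ((cycleCount σ j : ℝ) / N)) ^ 2 =
      (((N : ℝ) - j) / N) *
          (∑ σ ∈ Finset.univ.filter (fun σ : Equiv.Perm (Fin N) =>
              cycleLenSeq σ 0 = j ∧ cycleLenSeq σ 1 = j), p σ) / (j : ℝ) ^ 2 +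
        (∑ σ ∈ Finset.univ.filter (fun σ : Equiv.Perm (Fin N) =>
            cycleLenSeq σ 0 = j), p σ) / ((N : ℝ) * j) -
        ((∑ σ ∈ Finset.univ.filter (fun σ : Equiv.Perm (Fin N) =>
            cycleLenSeq σ 0 = j), p σ) / (j : ℝ)) ^ 2) :=
  stmt10_general N hN p hinv j hj1 hjN
end

section
/- For every w ∈ ℂ that is not of the form ik for k ∈ ℤ, one has ∑_{k∈ℤ} 1/(w² + k²) = π coth(πw)/w. -/
/-! Put `x = i w` in the Mittag-Leffler expansion `π cot (π x) = 1/x + ∑_{n ≥ 1} 2x/(x² - n²)`: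
since `cot (i z) = cosh z / (i sinh z)` and `(i w)² - k² = -(w² + k²)`, it becomes the expansion
of `π coth (π w)`. -/

open Real Complex

namespace Complex

theorem cot_mul_I (z : ℂ) : cot (z * I) = cosh z / (sinh z * I) := by
  rw [cot_eq_cos_div_sin, cos_mul_I, sin_mul_I]

theorem pi_mul_cot_pi_mul_eq_mul_tsum_int {x : ℂ} (hx : x ∈ integerComplement) :
    π * cot (π * x) = x * ∑' k : ℤ, (x ^ 2 - k ^ 2)⁻¹ := by
  have hsum : Summable fun k : ℤ ↦ (x ^ 2 - k ^ 2)⁻¹ := by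
    refine (EisensteinSeries.summable_linear_sub_mul_linear_add x 1 1).congr fun k ↦ ?_
    ring_nf
  have heven : (fun k : ℤ ↦ (x ^ 2 - (k : ℂ) ^ 2)⁻¹).Even := fun k ↦ by simp
  have hterm (n : ℕ+) : 1 / (x - n) + 1 / (x + n) = 2 * x * (x ^ 2 - (n : ℂ) ^ 2)⁻¹ := by
    have h₁ : x - n ≠ 0 := by simpa [sub_eq_add_neg] using integerComplement_add_ne_zero hx (-n)
    have h₂ : x + n ≠ 0 := by simpa using integerComplement_add_ne_zero hx n
    rw [show x ^ 2 - (n : ℂ) ^ 2 = (x - n) * (x + n) by ring]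
    field_simp
    ring
  have hx₀ : x ≠ 0 := integerComplement.ne_zero hx
  rw [tsum_int_eq_zero_add_two_mul_tsum_pnat heven hsum, cot_series_rep hx]
  simp only [hterm, tsum_mul_left]
  push_cast
  field_simp
  ring

theorem I_mul_mem_integerComplement {w : ℂ} (hw : ∀ k : ℤ, w ≠ I * k) :
    I * w ∈ integerComplement := by
  rintro ⟨k, hk⟩
  apply hw (-k)
  push_cast
  linear_combination I * hk + w * I_sq

end Complex

/-- Partial fraction expansion of the hyperbolic cotangent:
`∑_{k∈ℤ} 1/(w² + k²) = π coth(πw)/w` for `w` not of the form `ik`, `k ∈ ℤ`. -/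
theorem stmt16 (w : ℂ) (hw : ∀ k : ℤ, w ≠ Complex.I * k) :
    ∑' k : ℤ, (w ^ 2 + (k : ℂ) ^ 2)⁻¹ =
      (Real.pi : ℂ) * Complex.cosh (Real.pi * w) /
        (Complex.sinh (Real.pi * w) * w) := by
  have hw₀ : w ≠ 0 := by simpa using hw 0
  have h := pi_mul_cot_pi_mul_eq_mul_tsum_int (I_mul_mem_integerComplement hw)
  rw [show (π : ℂ) * (I * w) = π * w * I by ring, cot_mul_I] at h
  simp only [mul_pow, I_sq, neg_one_mul, ← neg_add', inv_neg, tsum_neg] at h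
  generalize ∑' k : ℤ, (w ^ 2 + (k : ℂ) ^ 2)⁻¹ = S at h ⊢
  calc S = π * (cosh (π * w) / (sinh (π * w) * I)) * (I / w) := by
        rw [h]
        field_simp
        rw [I_sq]
        ring
    _ = π * cosh (π * w) / (sinh (π * w) * w) := by
        field_simp
end
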